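/- Let λ ≤ Λ be a speed function, f 1-Lipschitz nondecreasing, and h the corresponding Hopf–Lax function. Then for all ξ ∈ ℝ and t ≤ t' ∈ [0,T]: 0 ≤ h(t',ξ) − h(t,ξ) ≤ (Λ/4)·(t' − t). -/

import Mathlib

/-!
Extending an admissible path for time `t` by standing still on `[t, t']` costs at
most `Λ φ(0) = Λ/4` per unit time, which gives the upper bound. For monotonicity, a
path `w` for time `t'` is replaced by one that follows `w` up to a time `c < t` and then
runs straight to `ξ`, arriving at time `t`. Since `u φ(β/u) ≤ β₊ + u/4`, the straight run
costs at most `(ξ - w c)₊ + Λ (t - c)/4`, whereas `φ(x) ≥ x` and the fundamental theorem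
of calculus show that `w` spends at least `(ξ - w c)₊` on `[c, t']`; letting `c → t`
gives `h(t, ξ) ≤ h(t', ξ)`.
-/

/-- The Hopf–Lax kernel `φ`. -/
noncomputable def hlKernel (ξ : ℝ) : ℝ :=
  if ξ ≤ -1 then 0 else if ξ < 1 then (ξ + 1) ^ 2 / 4 else ξ

/-- A path is piecewise `C¹` on `[a,b]`: it is continuous, and `C¹` on each piece of
some finite partition of `[a,b]`. -/
def PiecewiseC1On (w : ℝ → ℝ) (a b : ℝ) : Prop :=
  ContinuousOn w (Set.Icc a b) ∧
  ∃ (k : ℕ) (s : Fin (k + 1) → ℝ), StrictMono s ∧ s 0 = a ∧ s (Fin.last k) = b ∧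
    ∀ i : Fin k, ContDiffOn ℝ 1 w (Set.Icc (s i.castSucc) (s i.succ))

/-- The Hopf–Lax function for a space-time dependent speed `λ` and initial data `f`. -/
noncomputable def hopfLax (lam : ℝ → ℝ → ℝ) (f : ℝ → ℝ) (t ξ : ℝ) : ℝ :=
  sInf {y : ℝ | ∃ w : ℝ → ℝ, PiecewiseC1On w 0 t ∧ w t = ξ ∧
    y = (∫ s in (0:ℝ)..t, lam s (w s) * hlKernel (deriv w s / lam s (w s))) + f (w 0)}

open Set Filter Topology MeasureTheory intervalIntegral

lemma hlKernel_nonneg (x : ℝ) : 0 ≤ hlKernel x := by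
  unfold hlKernel; split_ifs <;> first | positivity | linarith

lemma le_hlKernel (x : ℝ) : x ≤ hlKernel x := by
  unfold hlKernel; split_ifs <;> nlinarith

lemma measurable_hlKernel : Measurable hlKernel :=
  Measurable.ite measurableSet_Iic measurable_const
    (Measurable.ite measurableSet_Iio (by fun_prop) measurable_id)

lemma mul_hlKernel_div_le {u : ℝ} (hu : 0 < u) (c : ℝ) :
    u * hlKernel (c / u) ≤ max c 0 + u / 4 := by
  unfold hlKernel
  split_ifs with h₁ h₂
  · linarith [le_max_right c 0]
  · rw [not_le, lt_div_iff₀ hu] at h₁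
    rw [div_lt_one hu] at h₂
    have key : (c + u) ^ 2 ≤ 4 * u * max c 0 + u ^ 2 := by
      rcases le_total 0 c with hc | hc
      · rw [max_eq_left hc]; nlinarith
      · rw [max_eq_right hc]; nlinarith
    calc u * ((c / u + 1) ^ 2 / 4) = (c + u) ^ 2 / (4 * u) := by field_simp
      _ ≤ max c 0 + u / 4 := by rw [div_le_iff₀ (by positivity)]; nlinarith
  · rw [mul_div_cancel₀ _ hu.ne']
    linarith [le_max_left c 0]

noncomputable def hlLagrangian (lam : ℝ → ℝ → ℝ) (w : ℝ → ℝ) (s : ℝ) : ℝ :=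
  lam s (w s) * hlKernel (deriv w s / lam s (w s))

section Lagrangian

variable {lam : ℝ → ℝ → ℝ} {w v : ℝ → ℝ} {s a b : ℝ}

lemma hlLagrangian_nonneg (h : 0 < lam s (w s)) : 0 ≤ hlLagrangian lam w s :=
  mul_nonneg h.le (hlKernel_nonneg _)

lemma deriv_le_hlLagrangian (h : 0 < lam s (w s)) : deriv w s ≤ hlLagrangian lam w s := by
  simpa only [hlLagrangian, mul_div_cancel₀ _ h.ne'] using
    mul_le_mul_of_nonneg_left (le_hlKernel (deriv w s / lam s (w s))) h.le

lemma hlLagrangian_le {Λ : ℝ} (h : 0 < lam s (w s)) (hΛ : lam s (w s) ≤ Λ) :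
    hlLagrangian lam w s ≤ max (deriv w s) 0 + Λ / 4 :=
  (mul_hlKernel_div_le h (deriv w s)).trans (by linarith)

lemma Filter.EventuallyEq.hlLagrangian_eq (h : v =ᶠ[𝓝 s] w) :
    hlLagrangian lam v s = hlLagrangian lam w s := by
  simp only [hlLagrangian, h.deriv_eq, h.eq_of_nhds]

lemma integral_hlLagrangian_congr (hab : a ≤ b) (h : EqOn v w (Icc a b)) :
    ∫ x in a..b, hlLagrangian lam v x = ∫ x in a..b, hlLagrangian lam w x := by
  simp only [integral_of_le hab, integral_Ioc_eq_integral_Ioo]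
  exact setIntegral_congr_fun measurableSet_Ioo fun x hx =>
    (eventuallyEq_of_mem (Icc_mem_nhds hx.1 hx.2) h).hlLagrangian_eq

end Lagrangian

namespace PiecewiseC1On

variable {w v : ℝ → ℝ} {a b c : ℝ}

lemma le (hw : PiecewiseC1On w a b) : a ≤ b := by
  obtain ⟨-, k, s, hs, rfl, rfl, -⟩ := hw
  exact hs.monotone (Fin.zero_le _)

lemma refl (w : ℝ → ℝ) (a : ℝ) : PiecewiseC1On w a a :=
  ⟨by simp, 0, fun _ => a, Fin.strictMono_iff_lt_succ.2 fun i => i.elim0, rfl, rfl, Fin.elim0⟩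

lemma congr (hw : PiecewiseC1On w a b) (h : EqOn v w (Icc a b)) : PiecewiseC1On v a b := by
  obtain ⟨hc, k, s, hs, h0, hl, hp⟩ := hw
  have hmem (i : Fin (k + 1)) : s i ∈ Icc a b :=
    ⟨h0 ▸ hs.monotone (Fin.zero_le _), hl ▸ hs.monotone (Fin.le_last _)⟩
  exact ⟨hc.congr h, k, s, hs, h0, hl, fun i => (hp i).congr fun x hx =>
    h (Icc_subset_Icc (hmem i.castSucc).1 (hmem i.succ).2 hx)⟩

lemma snoc (hw : PiecewiseC1On w a b) (hbc : b ≤ c) (hd : ContDiffOn ℝ 1 w (Icc b c)) :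
    PiecewiseC1On w a c := by
  rcases hbc.eq_or_lt with rfl | hbc
  · exact hw
  have hcont : ContinuousOn w (Icc a c) := by
    rw [← Icc_union_Icc_eq_Icc hw.le hbc.le]
    exact hw.1.union_of_isClosed hd.continuousOn isClosed_Icc isClosed_Icc
  obtain ⟨-, k, s, hs, h0, hl, hp⟩ := hw
  refine ⟨hcont, k + 1, Fin.snoc s c, ?_, by rw [← Fin.castSucc_zero, Fin.snoc_castSucc, h0],
    by simp, ?_⟩
  · rw [Fin.strictMono_iff_lt_succ]
    refine Fin.lastCases ?_ (fun j => ?_)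
    · simpa [hl] using hbc
    · rw [Fin.succ_castSucc, Fin.snoc_castSucc, Fin.snoc_castSucc]
      exact hs (Fin.castSucc_lt_succ (i := j))
  · refine Fin.lastCases ?_ (fun j => ?_)
    · simpa [hl] using hd
    · rw [Fin.succ_castSucc, Fin.snoc_castSucc, Fin.snoc_castSucc]
      exact hp j

theorem induction_on {P : ℝ → Prop} (hw : PiecewiseC1On w a b) (base : P a)
    (step : ∀ m c, PiecewiseC1On w a m → m < c → ContDiffOn ℝ 1 w (Icc m c) →
      P m → P c) :
    P b := by
  obtain ⟨-, k, s, hs, h0, rfl, hp⟩ := hw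
  suffices PiecewiseC1On w a (s (Fin.last k)) ∧ P (s (Fin.last k)) from this.2
  induction k with
  | zero =>
    show PiecewiseC1On w a (s 0) ∧ P (s 0)
    rw [h0]
    exact ⟨refl w a, base⟩
  | succ k ih =>
    obtain ⟨hpc, hP⟩ := ih (s ∘ Fin.castSucc) (hs.comp Fin.strictMono_castSucc) h0
      fun i => by simpa [← Fin.succ_castSucc] using hp i.castSucc
    have hlt : s (Fin.last k).castSucc < s (Fin.last (k + 1)) := hs (Fin.castSucc_lt_last _)
    have hpiece : ContDiffOn ℝ 1 w (Icc (s (Fin.last k).castSucc) (s (Fin.last (k + 1)))) :=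
      by simpa using hp (Fin.last k)
    exact ⟨hpc.snoc hlt.le hpiece, step _ _ hpc hlt hpiece hP⟩

lemma mono_right (hw : PiecewiseC1On w a b) (hac : a ≤ c) (hcb : c ≤ b) :
    PiecewiseC1On w a c :=
  hw.induction_on (P := fun d => ∀ e, a ≤ e → e ≤ d → PiecewiseC1On w a e)
    (fun e hae hea => by rw [le_antisymm hea hae]; exact refl w a)
    (fun m d hm _ hwd ih e hae hed => (le_or_gt e m).elim (ih e hae)
      fun hme => hm.snoc hme.le (hwd.mono (Icc_subset_Icc le_rfl hed)))
    c hac hcb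

end PiecewiseC1On

section Integrability

variable {lam : ℝ → ℝ → ℝ} {Λ : ℝ} {w g : ℝ → ℝ} {a b c M : ℝ}

lemma intervalIntegrable_of_abs_le (hab : a ≤ b)
    (hg : AEStronglyMeasurable g (volume.restrict (Ioc a b)))
    (hM : ∀ x ∈ Ioo a b, |g x| ≤ M) : IntervalIntegrable g volume a b := by
  refine (intervalIntegrable_const (c := M)).mono_fun' (by rwa [uIoc_of_le hab]) ?_
  rw [uIoc_of_le hab, Measure.restrict_congr_set Ioo_ae_eq_Ioc.symm]
  filter_upwards [ae_restrict_mem measurableSet_Ioo] with x hx using hM x hx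

lemma ContDiffOn.exists_abs_deriv_le (hw : ContDiffOn ℝ 1 w (Icc a b)) :
    ∃ M, ∀ x ∈ Ioo a b, |deriv w x| ≤ M := by
  rcases lt_or_ge a b with hab | hba
  · have hcont := hw.continuousOn_derivWithin (uniqueDiffOn_Icc hab) le_rfl
    obtain ⟨M, hM⟩ := isCompact_Icc.exists_bound_of_continuousOn hcont
    refine ⟨M, fun x hx => ?_⟩
    rw [← derivWithin_of_mem_nhds (Icc_mem_nhds hx.1 hx.2)]
    exact hM x (Ioo_subset_Icc_self hx)
  · exact ⟨0, fun x hx => absurd (hx.1.trans hx.2) hba.not_gt⟩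

lemma ContDiffOn.intervalIntegrable_deriv (hw : ContDiffOn ℝ 1 w (Icc a b)) (hab : a ≤ b) :
    IntervalIntegrable (deriv w) volume a b :=
  have ⟨_, hM⟩ := hw.exists_abs_deriv_le
  intervalIntegrable_of_abs_le hab (measurable_deriv w).aestronglyMeasurable hM

lemma ContDiffOn.integral_deriv (hw : ContDiffOn ℝ 1 w (Icc a b)) (hab : a ≤ b) :
    ∫ x in a..b, deriv w x = w b - w a :=
  integral_eq_sub_of_hasDerivAt_of_le hab hw.continuousOn
    (fun x hx => ((hw.differentiableOn one_ne_zero x (Ioo_subset_Icc_self hx)).differentiableAt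
      (Icc_mem_nhds hx.1 hx.2)).hasDerivAt) (hw.intervalIntegrable_deriv hab)

lemma ContDiffOn.intervalIntegrable_hlLagrangian (hmeas : Measurable (Function.uncurry lam))
    (hpos : ∀ t ξ, 0 < lam t ξ) (hbd : ∀ t ξ, lam t ξ ≤ Λ)
    (hw : ContDiffOn ℝ 1 w (Icc a b)) (hab : a ≤ b) :
    IntervalIntegrable (hlLagrangian lam w) volume a b := by
  obtain ⟨M, hM⟩ := hw.exists_abs_deriv_le
  have hwm : AEMeasurable w (volume.restrict (Ioc a b)) :=
    (hw.continuousOn.mono Ioc_subset_Icc_self).aemeasurable measurableSet_Ioc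
  have hlam : AEMeasurable (fun s => lam s (w s)) (volume.restrict (Ioc a b)) :=
    hmeas.comp_aemeasurable (aemeasurable_id.prodMk hwm)
  refine intervalIntegrable_of_abs_le (M := M + Λ / 4) hab
    (hlam.mul (measurable_hlKernel.comp_aemeasurable
      ((measurable_deriv w).aemeasurable.div hlam))).aestronglyMeasurable fun x hx => ?_
  have hle := hlLagrangian_le (hpos x (w x)) (hbd x (w x))
  rw [abs_of_nonneg (hlLagrangian_nonneg (hpos x (w x)))]
  linarith [max_le (le_abs_self (deriv w x)) (abs_nonneg (deriv w x)), hM x hx]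

namespace PiecewiseC1On

lemma intervalIntegrable (hw : PiecewiseC1On w a b)
    (hg : ∀ m c, m ≤ c → ContDiffOn ℝ 1 w (Icc m c) → IntervalIntegrable g volume m c) :
    IntervalIntegrable g volume a b :=
  hw.induction_on (P := fun c => IntervalIntegrable g volume a c) .refl
    fun m c _ hmc hwc ih => ih.trans (hg m c hmc.le hwc)

lemma intervalIntegrable_deriv (hw : PiecewiseC1On w a b) :
    IntervalIntegrable (deriv w) volume a b :=
  hw.intervalIntegrable fun _ _ h hwc => hwc.intervalIntegrable_deriv h

lemma intervalIntegrable_hlLagrangian (hmeas : Measurable (Function.uncurry lam))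
    (hpos : ∀ t ξ, 0 < lam t ξ) (hbd : ∀ t ξ, lam t ξ ≤ Λ) (hw : PiecewiseC1On w a b) :
    IntervalIntegrable (hlLagrangian lam w) volume a b :=
  hw.intervalIntegrable fun _ _ h hwc => hwc.intervalIntegrable_hlLagrangian hmeas hpos hbd h

lemma integral_deriv (hw : PiecewiseC1On w a b) : ∫ x in a..b, deriv w x = w b - w a :=
  hw.induction_on (P := fun c => ∫ x in a..c, deriv w x = w c - w a) (by simp)
    fun m c hm hmc hwc ih => by
      rw [← integral_add_adjacent_intervals hm.intervalIntegrable_deriv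
        (hwc.intervalIntegrable_deriv hmc.le), ih, hwc.integral_deriv hmc.le]
      ring

lemma sub_le_integral_hlLagrangian (hmeas : Measurable (Function.uncurry lam))
    (hpos : ∀ t ξ, 0 < lam t ξ) (hbd : ∀ t ξ, lam t ξ ≤ Λ) (hw : PiecewiseC1On w a b)
    (hac : a ≤ c) (hcb : c ≤ b) :
    max (w b - w c) 0 ≤ ∫ x in c..b, hlLagrangian lam w x := by
  have hwc := hw.mono_right hac hcb
  have hderiv : ∫ x in c..b, deriv w x = w b - w c := by
    rw [← integral_interval_sub_left hw.intervalIntegrable_deriv hwc.intervalIntegrable_deriv,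
      hw.integral_deriv, hwc.integral_deriv]
    ring
  have hL := (hwc.intervalIntegrable_hlLagrangian hmeas hpos hbd).symm.trans
    (hw.intervalIntegrable_hlLagrangian hmeas hpos hbd)
  refine max_le ?_ (integral_nonneg hcb fun x _ => hlLagrangian_nonneg (hpos x (w x)))
  rw [← hderiv]
  exact integral_mono_on hcb
    (hwc.intervalIntegrable_deriv.symm.trans hw.intervalIntegrable_deriv) hL
    fun x _ => deriv_le_hlLagrangian (hpos x (w x))

end PiecewiseC1On

end Integrability

section HopfLax

variable {lam : ℝ → ℝ → ℝ} {Λ : ℝ} {f w g : ℝ → ℝ} {a c d t t' ξ : ℝ}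

lemma PiecewiseC1On.exists_concat (hmeas : Measurable (Function.uncurry lam))
    (hpos : ∀ t ξ, 0 < lam t ξ) (hbd : ∀ t ξ, lam t ξ ≤ Λ) (hw : PiecewiseC1On w a c)
    (hcd : c ≤ d) (hg : ContDiffOn ℝ 1 g (Icc c d)) (hgc : g c = w c) :
    ∃ v, PiecewiseC1On v a d ∧ v a = w a ∧ v d = g d ∧
      ∫ x in a..d, hlLagrangian lam v x =
        (∫ x in a..c, hlLagrangian lam w x) + ∫ x in c..d, hlLagrangian lam g x := by
  set v : ℝ → ℝ := fun x => if x ≤ c then w x else g x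
  have hvw : EqOn v w (Icc a c) := fun x hx => if_pos hx.2
  have hvg : EqOn v g (Icc c d) := fun x hx => by
    rcases hx.1.eq_or_lt with rfl | hcx
    · exact (if_pos le_rfl).trans hgc.symm
    · exact if_neg hcx.not_ge
  have hv₁ := hw.congr hvw
  have hv₂ := hg.congr hvg
  refine ⟨v, hv₁.snoc hcd hv₂, hvw ⟨le_rfl, hw.le⟩, hvg ⟨hcd, le_rfl⟩, ?_⟩
  rw [← integral_add_adjacent_intervals (hv₁.intervalIntegrable_hlLagrangian hmeas hpos hbd)
    (hv₂.intervalIntegrable_hlLagrangian hmeas hpos hbd hcd),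
    integral_hlLagrangian_congr hw.le hvw, integral_hlLagrangian_congr hcd hvg]

lemma integral_hlLagrangian_affine_le (hmeas : Measurable (Function.uncurry lam))
    (hpos : ∀ t ξ, 0 < lam t ξ) (hbd : ∀ t ξ, lam t ξ ≤ Λ) (hcd : c ≤ d) (p k : ℝ) :
    ∫ x in c..d, hlLagrangian lam (fun s => p + k * (s - c)) x ≤
      (max k 0 + Λ / 4) * (d - c) := by
  have hderiv (x : ℝ) : deriv (fun s => p + k * (s - c)) x = k := by simp
  have hL : IntervalIntegrable (hlLagrangian lam (fun s => p + k * (s - c))) volume c d :=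
    ContDiffOn.intervalIntegrable_hlLagrangian hmeas hpos hbd (by fun_prop) hcd
  calc _ ≤ ∫ _ in c..d, max k 0 + Λ / 4 :=
        integral_mono_on hcd hL intervalIntegrable_const fun x _ => by
          simpa only [hderiv] using
            hlLagrangian_le (w := fun s => p + k * (s - c)) (hpos _ _) (hbd _ _)
    _ = (max k 0 + Λ / 4) * (d - c) := by
        rw [intervalIntegral.integral_const, smul_eq_mul, mul_comm]

noncomputable def hlCost (lam : ℝ → ℝ → ℝ) (f w : ℝ → ℝ) (t : ℝ) : ℝ :=
  (∫ s in (0 : ℝ)..t, hlLagrangian lam w s) + f (w 0)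

lemma apply_le_hlCost (hmeas : Measurable (Function.uncurry lam))
    (hpos : ∀ t ξ, 0 < lam t ξ) (hbd : ∀ t ξ, lam t ξ ≤ Λ)
    (hf : ∀ ξ ξ' : ℝ, ξ ≤ ξ' → 0 ≤ f ξ' - f ξ ∧ f ξ' - f ξ ≤ ξ' - ξ)
    (hw : PiecewiseC1On w 0 t) : f (w t) ≤ hlCost lam f w t := by
  have h := hw.sub_le_integral_hlLagrangian hmeas hpos hbd le_rfl hw.le
  unfold hlCost
  rcases le_total (w 0) (w t) with h0 | h0
  · linarith [(hf _ _ h0).2, le_max_left (w t - w 0) 0]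
  · linarith [(hf _ _ h0).1, le_max_right (w t - w 0) 0]

lemma hopfLax_le_hlCost (hmeas : Measurable (Function.uncurry lam))
    (hpos : ∀ t ξ, 0 < lam t ξ) (hbd : ∀ t ξ, lam t ξ ≤ Λ)
    (hf : ∀ ξ ξ' : ℝ, ξ ≤ ξ' → 0 ≤ f ξ' - f ξ ∧ f ξ' - f ξ ≤ ξ' - ξ)
    (hw : PiecewiseC1On w 0 t) (hwt : w t = ξ) : hopfLax lam f t ξ ≤ hlCost lam f w t := by
  refine csInf_le ⟨f ξ, ?_⟩ ⟨w, hw, hwt, rfl⟩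
  rintro _ ⟨v, hv, rfl, rfl⟩
  exact apply_le_hlCost hmeas hpos hbd hf hv

lemma le_hopfLax {y : ℝ} (ht : 0 ≤ t)
    (h : ∀ w, PiecewiseC1On w 0 t → w t = ξ → y ≤ hlCost lam f w t) :
    y ≤ hopfLax lam f t ξ :=
  le_csInf ⟨_, fun _ => ξ, (PiecewiseC1On.refl _ 0).snoc ht contDiffOn_const, rfl, rfl⟩
    fun _ ⟨w, hw, hwt, hy⟩ => hy ▸ h w hw hwt

lemma hopfLax_le_add (hmeas : Measurable (Function.uncurry lam))
    (hpos : ∀ t ξ, 0 < lam t ξ) (hbd : ∀ t ξ, lam t ξ ≤ Λ)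
    (hf : ∀ ξ ξ' : ℝ, ξ ≤ ξ' → 0 ≤ f ξ' - f ξ ∧ f ξ' - f ξ ≤ ξ' - ξ)
    (ht : 0 ≤ t) (htt' : t ≤ t') :
    hopfLax lam f t' ξ ≤ hopfLax lam f t ξ + Λ / 4 * (t' - t) := by
  rw [← sub_le_iff_le_add]
  refine le_hopfLax ht fun w hw hwt => ?_
  obtain ⟨v, hv, hv0, hvt', hcost⟩ := hw.exists_concat hmeas hpos hbd htt'
    (g := fun s => ξ + 0 * (s - t)) (by fun_prop) (by simp [hwt])
  have hstay := integral_hlLagrangian_affine_le hmeas hpos hbd htt' ξ 0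
  have hv := hopfLax_le_hlCost hmeas hpos hbd hf hv (by simpa using hvt')
  simp only [hlCost, hcost, hv0, max_self, zero_add] at hstay hv ⊢
  linarith

lemma hopfLax_le_hlCost_add (hmeas : Measurable (Function.uncurry lam))
    (hpos : ∀ t ξ, 0 < lam t ξ) (hbd : ∀ t ξ, lam t ξ ≤ Λ)
    (hf : ∀ ξ ξ' : ℝ, ξ ≤ ξ' → 0 ≤ f ξ' - f ξ ∧ f ξ' - f ξ ≤ ξ' - ξ)
    (hw : PiecewiseC1On w 0 t') (hwt : w t' = ξ) (hc : 0 ≤ c) (hct : c < t)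
    (htt' : t ≤ t') :
    hopfLax lam f t ξ ≤ hlCost lam f w t' + Λ / 4 * (t - c) := by
  have hwc := hw.mono_right hc (hct.le.trans htt')
  set k := (ξ - w c) / (t - c)
  obtain ⟨v, hv, hv0, hvt, hcost⟩ := hwc.exists_concat hmeas hpos hbd hct.le
    (g := fun s => w c + k * (s - c)) (by fun_prop) (by simp)
  have hvt' : v t = ξ := by
    rw [hvt, div_mul_cancel₀ _ (sub_pos.2 hct).ne']
    ring
  have hsprint := integral_hlLagrangian_affine_le hmeas hpos hbd hct.le (w c) k
  rw [add_mul, max_mul_of_nonneg _ _ (sub_pos.2 hct).le, zero_mul,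
    div_mul_cancel₀ _ (sub_pos.2 hct).ne'] at hsprint
  have hrest := hw.sub_le_integral_hlLagrangian hmeas hpos hbd hc (hct.le.trans htt')
  have hsplit := integral_interval_sub_left (hw.intervalIntegrable_hlLagrangian hmeas hpos hbd)
    (hwc.intervalIntegrable_hlLagrangian hmeas hpos hbd)
  have hv := hopfLax_le_hlCost hmeas hpos hbd hf hv hvt'
  rw [hwt] at hrest
  simp only [hlCost, hcost, hv0] at hv ⊢
  linarith

lemma hopfLax_mono (hmeas : Measurable (Function.uncurry lam))
    (hpos : ∀ t ξ, 0 < lam t ξ) (hbd : ∀ t ξ, lam t ξ ≤ Λ)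
    (hf : ∀ ξ ξ' : ℝ, ξ ≤ ξ' → 0 ≤ f ξ' - f ξ ∧ f ξ' - f ξ ≤ ξ' - ξ)
    (ht : 0 ≤ t) (htt' : t ≤ t') : hopfLax lam f t ξ ≤ hopfLax lam f t' ξ := by
  refine le_hopfLax (ht.trans htt') fun w hw hwt => ?_
  rcases ht.eq_or_lt with rfl | ht
  · calc hopfLax lam f 0 ξ ≤ hlCost lam f (fun _ => ξ) 0 :=
          hopfLax_le_hlCost hmeas hpos hbd hf (PiecewiseC1On.refl _ 0) rfl
      _ = f (w t') := by simp [hlCost, hwt]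
      _ ≤ hlCost lam f w t' := apply_le_hlCost hmeas hpos hbd hf hw
  · have hlim : Tendsto (fun c => hlCost lam f w t' + Λ / 4 * (t - c)) (𝓝[<] t)
        (𝓝 (hlCost lam f w t')) :=
      ((by fun_prop : Continuous fun c => hlCost lam f w t' + Λ / 4 * (t - c)).tendsto' t _
        (by simp)).mono_left nhdsWithin_le_nhds
    refine ge_of_tendsto hlim ?_
    filter_upwards [Ioo_mem_nhdsLT ht] with c hc
    exact hopfLax_le_hlCost_add hmeas hpos hbd hf hw hwt hc.1.le hc.2 htt'

end HopfLax

theorem stmt12_general (T Λ : ℝ) (lam : ℝ → ℝ → ℝ)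
    (hmeas : Measurable (Function.uncurry lam))
    (hpos : ∀ t ξ, 0 < lam t ξ) (hbd : ∀ t ξ, lam t ξ ≤ Λ)
    (f : ℝ → ℝ) (hf : ∀ ξ ξ' : ℝ, ξ ≤ ξ' → 0 ≤ f ξ' - f ξ ∧ f ξ' - f ξ ≤ ξ' - ξ) :
    ∀ ξ : ℝ, ∀ t t' : ℝ, 0 ≤ t → t ≤ t' → t' ≤ T →
      0 ≤ hopfLax lam f t' ξ - hopfLax lam f t ξ ∧
        hopfLax lam f t' ξ - hopfLax lam f t ξ ≤ Λ / 4 * (t' - t) := by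
  intro ξ t t' ht htt' _
  exact ⟨sub_nonneg.2 (hopfLax_mono hmeas hpos hbd hf ht htt'),
    sub_le_iff_le_add'.2 (hopfLax_le_add hmeas hpos hbd hf ht htt')⟩

/-- Temporal monotonicity and `Λ/4`-Lipschitz property of the Hopf–Lax semigroup. -/
theorem stmt12 (T Λ : ℝ) (hT : 0 < T) (hΛ : 0 < Λ) (lam : ℝ → ℝ → ℝ)
    (hmeas : Measurable (Function.uncurry lam))
    (hpos : ∀ t ξ, 0 < lam t ξ) (hbd : ∀ t ξ, lam t ξ ≤ Λ)
    (f : ℝ → ℝ) (hf : ∀ ξ ξ' : ℝ, ξ ≤ ξ' → 0 ≤ f ξ' - f ξ ∧ f ξ' - f ξ ≤ ξ' - ξ) :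
    ∀ ξ : ℝ, ∀ t t' : ℝ, 0 ≤ t → t ≤ t' → t' ≤ T →
      0 ≤ hopfLax lam f t' ξ - hopfLax lam f t ξ ∧
        hopfLax lam f t' ξ - hopfLax lam f t ξ ≤ Λ / 4 * (t' - t) :=
  stmt12_general T Λ lam hmeas hpos hbd f hf
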